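/- arXiv:2409.06932 — 5 statements merged into one kernel-verified Lean document; each statement's English description precedes it below -/
import Mathlib

section
/- Let p and q be probability distributions on a finite group G such that |p(x) - 1/|G|| ≤ ε/|G| and |q(x) - 1/|G|| ≤ ε/|G| for all x ∈ G. Then their convolution p*q satisfies |p*q(x) - 1/|G|| ≤ ε²/|G| for all x ∈ G. -/
open scoped BigOperators

/-! Writing `p = u + f` and `q = u + g` with `u = 1/|G|` the uniform distribution, the
deviations `f`, `g` have total mass zero, so `u * g = f * u = 0` and `p * q - u = f * g`.
Each term of `f * g` is at most `(ε/|G|)²` in absolute value, and there are `|G|` of them. -/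

noncomputable def conv {G : Type*} [Group G] [Fintype G] (p q : G → ℝ) : G → ℝ :=
  fun x => ∑ y, p y * q (y⁻¹ * x)

section Convolution

variable {G : Type*} [Group G] [Fintype G]

theorem sum_comp_inv_mul (f : G → ℝ) (x : G) : ∑ y, f (y⁻¹ * x) = ∑ y, f y :=
  Equiv.sum_comp ((Equiv.inv G).trans (Equiv.mulRight x)) f

theorem conv_sub_const_sub_const (p q : G → ℝ) (a b : ℝ) (x : G) :
    conv (fun y => p y - a) (fun y => q y - b) x =
      conv p q x - b * ∑ y, p y - a * ∑ y, q y + Fintype.card G * (a * b) := by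
  simp only [conv, sub_mul, mul_sub, Finset.sum_sub_distrib, Finset.sum_const, nsmul_eq_mul,
    Finset.card_univ, ← Finset.mul_sum, ← Finset.sum_mul, sum_comp_inv_mul q x]
  ring

theorem conv_sub_inv_card {p q : G → ℝ} (hp : ∑ y, p y = 1) (hq : ∑ y, q y = 1) (x : G) :
    conv p q x - 1 / Fintype.card G =
      conv (fun y => p y - 1 / Fintype.card G) (fun y => q y - 1 / Fintype.card G) x := by
  have : (Fintype.card G : ℝ) ≠ 0 := by
    have : Nonempty G := ⟨x⟩
    positivity
  rw [conv_sub_const_sub_const, hp, hq]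
  field_simp
  ring

theorem abs_conv_le {p q : G → ℝ} {a b : ℝ} (hp : ∀ y, |p y| ≤ a) (hq : ∀ y, |q y| ≤ b)
    (x : G) : |conv p q x| ≤ Fintype.card G * (a * b) :=
  calc |conv p q x| ≤ ∑ y, |p y * q (y⁻¹ * x)| := Finset.abs_sum_le_sum_abs _ _
    _ ≤ ∑ _y : G, a * b := Finset.sum_le_sum fun y _ => by
        rw [abs_mul]
        exact mul_le_mul (hp y) (hq _) (abs_nonneg _) ((abs_nonneg _).trans (hp y))
    _ = Fintype.card G * (a * b) := by simp

end Convolution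

theorem conv_eps_uniform_general {G : Type*} [Group G] [Fintype G] (p q : G → ℝ) (ε : ℝ)
    (hp1 : ∑ x, p x = 1)
    (hq1 : ∑ x, q x = 1)
    (hpu : ∀ x, |p x - 1 / Fintype.card G| ≤ ε / Fintype.card G)
    (hqu : ∀ x, |q x - 1 / Fintype.card G| ≤ ε / Fintype.card G) :
    ∀ x, |conv p q x - 1 / Fintype.card G| ≤ ε ^ 2 / Fintype.card G := by
  intro x
  have : (Fintype.card G : ℝ) ≠ 0 := by
    have : Nonempty G := ⟨x⟩
    positivity
  calc |conv p q x - 1 / Fintype.card G|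
      ≤ Fintype.card G * (ε / Fintype.card G * (ε / Fintype.card G)) := by
        rw [conv_sub_inv_card hp1 hq1]
        exact abs_conv_le hpu hqu x
    _ = ε ^ 2 / Fintype.card G := by field_simp

/-- If `p` and `q` are ε-uniform distributions on a finite group `G`, then `p * q` is
ε²-uniform. -/
theorem conv_eps_uniform {G : Type*} [Group G] [Fintype G] (p q : G → ℝ) (ε : ℝ)
    (hp0 : ∀ x, 0 ≤ p x) (hp1 : ∑ x, p x = 1)
    (hq0 : ∀ x, 0 ≤ q x) (hq1 : ∑ x, q x = 1)
    (hpu : ∀ x, |p x - 1 / Fintype.card G| ≤ ε / Fintype.card G)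
    (hqu : ∀ x, |q x - 1 / Fintype.card G| ≤ ε / Fintype.card G) :
    ∀ x, |conv p q x - 1 / Fintype.card G| ≤ ε ^ 2 / Fintype.card G :=
  conv_eps_uniform_general p q ε hp1 hq1 hpu hqu
end

section
/- Let p and q be probability distributions on H^m (H a finite group) that are (ε,k)-uniform, i.e., for every set of k coordinates the marginal distribution is ε-uniform. Then the coordinate-wise convolution p*q is (ε²,k)-uniform. -/
open scoped BigOperators Classical

/-- Marginal of a distribution on `H^m` on the `k` coordinates given by `S`. -/
noncomputable def marginal {H : Type*} [Fintype H] {m k : ℕ}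
    (p : (Fin m → H) → ℝ) (S : Fin k → Fin m) : (Fin k → H) → ℝ :=
  fun z => ∑ x : Fin m → H, if ∀ i, x (S i) = z i then p x else 0

/-- `p` is `(ε, k)`-uniform: every marginal on `k` coordinates is ε-uniform. -/
def EpsKUniform {H : Type*} [Fintype H] {m : ℕ} (p : (Fin m → H) → ℝ) (ε : ℝ) (k : ℕ) : Prop :=
  ∀ S : Fin k → Fin m, Function.Injective S →
    ∀ z : Fin k → H, |marginal p S z - 1 / (Fintype.card H : ℝ) ^ k| ≤
      ε / (Fintype.card H : ℝ) ^ k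

/-!
Write `c = 1/|G|`. If `P` and `Q` have total mass one, then
`(P * Q)(z) - c = ∑_w (P w - c) (Q (w⁻¹ z) - c)`, so the deviations from uniform multiply:
each of the `|G|` terms is at most `(ε/|G|)(δ/|G|)`. Marginals are pushforwards along the
restriction homomorphism `H^m → H^k`, and pushforward along a homomorphism commutes with
convolution, so the marginals of `p * q` are the convolutions of the marginals of `p` and `q`.
-/

noncomputable section

def pushforward {G K : Type*} [Fintype G] (f : G → K) (p : G → ℝ) : K → ℝ :=
  fun y => ∑ x, if f x = y then p x else 0

def EpsUniform {G : Type*} [Fintype G] (P : G → ℝ) (ε : ℝ) : Prop :=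
  ∀ w, |P w - 1 / (Fintype.card G : ℝ)| ≤ ε / Fintype.card G

end

section Pushforward

variable {G K : Type*} [Fintype G] [Fintype K]

theorem sum_pushforward_mul (f : G → K) (p : G → ℝ) (g : K → ℝ) :
    ∑ y, pushforward f p y * g y = ∑ x, p x * g (f x) := by
  simp only [pushforward, Finset.sum_mul, ite_mul, zero_mul]
  rw [Finset.sum_comm]
  simp

theorem sum_pushforward (f : G → K) (p : G → ℝ) : ∑ y, pushforward f p y = ∑ x, p x := by
  simpa using sum_pushforward_mul f p 1

theorem pushforward_conv [Group G] [Group K] (f : G →* K) (p q : G → ℝ) :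
    pushforward f (conv p q) = conv (pushforward f p) (pushforward f q) := by
  funext z
  have translate : ∀ y, ∑ x, (if f x = z then q (y⁻¹ * x) else 0)
      = pushforward f q ((f y)⁻¹ * z) := by
    intro y
    rw [← Equiv.sum_comp (Equiv.mulLeft y)]
    simp [pushforward, eq_inv_mul_iff_mul_eq]
  calc pushforward f (conv p q) z
      = ∑ x, ∑ y, if f x = z then p y * q (y⁻¹ * x) else 0 := by
        simp only [pushforward, conv, Finset.sum_ite_irrel, Finset.sum_const_zero]
    _ = ∑ y, p y * ∑ x, if f x = z then q (y⁻¹ * x) else 0 := by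
        rw [Finset.sum_comm]
        simp only [Finset.mul_sum, mul_ite, mul_zero]
    _ = ∑ y, p y * pushforward f q ((f y)⁻¹ * z) := by simp only [translate]
    _ = conv (pushforward f p) (pushforward f q) z :=
        (sum_pushforward_mul f p fun w => pushforward f q (w⁻¹ * z)).symm

end Pushforward

section Marginal

variable {H : Type*} [Fintype H] {m k : ℕ}

theorem marginal_eq_pushforward (p : (Fin m → H) → ℝ) (S : Fin k → Fin m) :
    marginal p S = pushforward (fun x i => x (S i)) p := by
  funext z
  simp only [marginal, pushforward, funext_iff]

theorem marginal_conv [Group H] (p q : (Fin m → H) → ℝ) (S : Fin k → Fin m) :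
    marginal (conv p q) S = conv (marginal p S) (marginal q S) := by
  simp only [marginal_eq_pushforward]
  exact pushforward_conv (MonoidHom.pi fun i => Pi.evalMonoidHom (fun _ => H) (S i)) p q

theorem sum_marginal (p : (Fin m → H) → ℝ) (S : Fin k → Fin m) :
    ∑ z, marginal p S z = ∑ x, p x := by
  rw [marginal_eq_pushforward, sum_pushforward]

theorem epsKUniform_iff (p : (Fin m → H) → ℝ) (ε : ℝ) :
    EpsKUniform p ε k ↔ ∀ S : Fin k → Fin m, Function.Injective S → EpsUniform (marginal p S) ε := by
  simp [EpsKUniform, EpsUniform]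

end Marginal

section EpsUniform

variable {G : Type*} [Group G] [Fintype G] {P Q : G → ℝ}

theorem conv_sub_inv_card_s2 (hP : ∑ w, P w = 1) (hQ : ∑ w, Q w = 1) (z : G) :
    conv P Q z - 1 / Fintype.card G
      = ∑ w, (P w - 1 / Fintype.card G) * (Q (w⁻¹ * z) - 1 / Fintype.card G) := by
  have hQ' : ∑ w, Q (w⁻¹ * z) = 1 := by
    rw [← hQ]
    exact Fintype.sum_equiv ((Equiv.inv G).trans (Equiv.mulRight z)) _ _ fun _ => rfl
  have hN : (Fintype.card G : ℝ) ≠ 0 := by positivity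
  simp only [sub_mul, mul_sub, Finset.sum_sub_distrib, ← Finset.mul_sum, ← Finset.sum_mul,
    hP, hQ', conv, Finset.sum_const, Finset.card_univ, nsmul_eq_mul]
  field_simp
  ring

theorem EpsUniform.conv {ε δ : ℝ} (hPε : EpsUniform P ε) (hQδ : EpsUniform Q δ)
    (hP : ∑ w, P w = 1) (hQ : ∑ w, Q w = 1) : EpsUniform (conv P Q) (ε * δ) := by
  intro z
  set N : ℝ := (Fintype.card G : ℝ)
  rw [conv_sub_inv_card_s2 hP hQ]
  calc |∑ w, (P w - 1 / N) * (Q (w⁻¹ * z) - 1 / N)|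
      ≤ ∑ w, |P w - 1 / N| * |Q (w⁻¹ * z) - 1 / N| := by
        simpa only [abs_mul] using Finset.abs_sum_le_sum_abs
          (fun w => (P w - 1 / N) * (Q (w⁻¹ * z) - 1 / N)) Finset.univ
    _ ≤ ∑ _w : G, ε / N * (δ / N) := by
        gcongr with w
        · exact (abs_nonneg _).trans (hPε w)
        · exact hPε w
        · exact hQδ _
    _ = ε * δ / N := by
        have hN : N ≠ 0 := by positivity
        rw [Finset.sum_const, Finset.card_univ, nsmul_eq_mul]
        change N * _ = _
        field_simp

end EpsUniform

theorem conv_epsK_uniform_general {H : Type*} [Group H] [Fintype H] {m k : ℕ} (ε : ℝ)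
    (p q : (Fin m → H) → ℝ)
    (hp1 : ∑ x, p x = 1)
    (hq1 : ∑ x, q x = 1)
    (hpu : EpsKUniform p ε k) (hqu : EpsKUniform q ε k) :
    EpsKUniform (conv p q) (ε ^ 2) k := by
  rw [epsKUniform_iff] at hpu hqu ⊢
  intro S hS
  rw [marginal_conv, sq]
  exact (hpu S hS).conv (hqu S hS) (by rw [sum_marginal, hp1]) (by rw [sum_marginal, hq1])

/-- The coordinate-wise convolution of two `(ε,k)`-uniform distributions on `H^m`
is `(ε², k)`-uniform. -/
theorem conv_epsK_uniform {H : Type*} [Group H] [Fintype H] {m k : ℕ} (ε : ℝ)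
    (p q : (Fin m → H) → ℝ)
    (hp0 : ∀ x, 0 ≤ p x) (hp1 : ∑ x, p x = 1)
    (hq0 : ∀ x, 0 ≤ q x) (hq1 : ∑ x, q x = 1)
    (hpu : EpsKUniform p ε k) (hqu : EpsKUniform q ε k) :
    EpsKUniform (conv p q) (ε ^ 2) k :=
  conv_epsK_uniform_general ε p q hp1 hq1 hpu hqu
end

section
/- Let p be a probability distribution on H^m, H a finite group, such that the Fourier coefficient p̂(ρ) is the zero matrix for every irreducible representation ρ of H^m with 1 ≤ |ρ| ≤ k (number of non-trivial tensor factors). Then p is k-uniform: every k-coordinate marginal of p is exactly the uniform distribution on H^k. -/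
/-!
Let `q z` be the `k`-marginal of `p` at `z` minus `|H|⁻ᵏ`. For matrix coefficients `c₁, …, c_k` of
irreducible unitary representations, `∑_z q z ∏ᵢ cᵢ (zᵢ)` vanishes: placing the `cᵢ` at the
coordinates `S i` and trivial representations elsewhere, it is (up to conjugation) a Fourier
coefficient of `p` with at most `k` non-trivial factors minus the same for the uniform
distribution, and both vanish, the latter because a non-trivial irreducible representation sums
to zero over `H`; if all `cᵢ` are trivial, both `p` and the uniform distribution have mass one.
The matrix coefficients of irreducible unitary representations span all functions on `H`, since
the regular representation splits into irreducibles by repeatedly passing to an invariant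
subspace and its orthogonal complement. By multilinearity `q` is orthogonal to every function on
`H^k`, so `q = 0`.
-/

open scoped BigOperators Classical

/-- `ρ` is a unitary representation of `G`. -/
def IsUnitaryRep {G : Type*} [Group G] {n : Type*} [Fintype n] [DecidableEq n]
    (ρ : G → Matrix n n ℂ) : Prop :=
  (∀ x, ρ x ∈ Matrix.unitaryGroup n ℂ) ∧ (∀ x y, ρ (x * y) = ρ x * ρ y) ∧ ρ 1 = 1

/-- `ρ` is irreducible. -/
def IsIrredRep {G : Type*} [Group G] {n : Type*} [Fintype n]
    (ρ : G → Matrix n n ℂ) : Prop :=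
  Nonempty n ∧ ∀ W : Submodule ℂ (n → ℂ),
    (∀ x, ∀ v ∈ W, (ρ x).mulVec v ∈ W) → W = ⊥ ∨ W = ⊤

/-- Fourier coefficient `f̂(ρ) = (1/|G|) ∑ₓ f(x) conj(ρ(x))`. -/
noncomputable def repFourier {G : Type*} [Group G] [Fintype G] {n : Type*} [Fintype n]
    (f : G → ℂ) (ρ : G → Matrix n n ℂ) : Matrix n n ℂ :=
  (Fintype.card G : ℂ)⁻¹ • ∑ x, f x • (ρ x).map (starRingEnd ℂ)

/-- Tensor (Kronecker) product of a family of matrix-valued representations of `H`,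
giving a representation of `H^m`. -/
noncomputable def tensorRep {H : Type*} {m : ℕ} {n : Fin m → ℕ}
    (ρ : ∀ t, H → Matrix (Fin (n t)) (Fin (n t)) ℂ) :
    (Fin m → H) → Matrix (∀ t, Fin (n t)) (∀ t, Fin (n t)) ℂ :=
  fun x i j => ∏ t, ρ t (x t) (i t) (j t)

/-- The number of non-trivial factors of a tensor product representation. -/
noncomputable def suppSize {H : Type*} {m : ℕ} {n : Fin m → ℕ}
    (ρ : ∀ t, H → Matrix (Fin (n t)) (Fin (n t)) ℂ) : ℕ :=
  (Finset.univ.filter fun t => ∃ x, ρ t x ≠ 1).card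

open Matrix
open scoped InnerProductSpace

section UnitaryRep

variable {G : Type*} [Group G] {ι : Type*} [Fintype ι] [DecidableEq ι] {ρ : G → Matrix ι ι ℂ}

theorem IsUnitaryRep.map_mul (hρ : IsUnitaryRep ρ) (x y : G) : ρ (x * y) = ρ x * ρ y :=
  hρ.2.1 x y

theorem IsUnitaryRep.map_one (hρ : IsUnitaryRep ρ) : ρ 1 = 1 :=
  hρ.2.2

theorem IsUnitaryRep.star_eq (hρ : IsUnitaryRep ρ) (x : G) : star (ρ x) = ρ x⁻¹ := by
  have hinv : ρ x * ρ x⁻¹ = 1 := by rw [← hρ.map_mul, mul_inv_cancel, hρ.map_one]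
  calc star (ρ x) = star (ρ x) * (ρ x * ρ x⁻¹) := by rw [hinv, Matrix.mul_one]
    _ = ρ x⁻¹ := by rw [← Matrix.mul_assoc, Unitary.star_mul_self_of_mem (hρ.1 x), Matrix.one_mul]

theorem isUnitaryRep_of_star_eq (hmul : ∀ x y, ρ (x * y) = ρ x * ρ y) (hone : ρ 1 = 1)
    (hstar : ∀ x, star (ρ x) = ρ x⁻¹) : IsUnitaryRep ρ :=
  ⟨fun x => Matrix.mem_unitaryGroup_iff.2 (by rw [hstar, ← hmul, mul_inv_cancel, hone]),
    hmul, hone⟩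

theorem isUnitaryRep_one : IsUnitaryRep fun _ : G => (1 : Matrix ι ι ℂ) :=
  isUnitaryRep_of_star_eq (fun _ _ => (Matrix.mul_one 1).symm) rfl fun _ => star_one _

theorem IsUnitaryRep.conj (hρ : IsUnitaryRep ρ) {κ : Type*} [Fintype κ] [DecidableEq κ]
    {U : Matrix ι κ ℂ} (hU : Uᴴ * U = 1) (hU' : U * Uᴴ = 1) :
    IsUnitaryRep fun x => Uᴴ * ρ x * U := by
  refine isUnitaryRep_of_star_eq (fun x y => ?_) ?_ fun x => ?_
  · rw [hρ.map_mul]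
    simp only [Matrix.mul_assoc]
    rw [← Matrix.mul_assoc U, hU', Matrix.one_mul]
  · rw [hρ.map_one, Matrix.mul_one, hU]
  · rw [star_eq_conjTranspose, conjTranspose_mul, conjTranspose_mul, conjTranspose_conjTranspose,
      ← star_eq_conjTranspose, hρ.star_eq, Matrix.mul_assoc]

theorem IsUnitaryRep.of_fromBlocks {κ : Type*} [Fintype κ] [DecidableEq κ]
    {A : G → Matrix ι ι ℂ} {D : G → Matrix κ κ ℂ}
    (h : IsUnitaryRep fun x => fromBlocks (A x) 0 0 (D x)) : IsUnitaryRep A ∧ IsUnitaryRep D := by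
  have hmul : ∀ x y, A (x * y) = A x * A y ∧ D (x * y) = D x * D y := fun x y => by
    simpa [fromBlocks_multiply] using h.map_mul x y
  have hone : A 1 = 1 ∧ D 1 = 1 := by
    simpa [← fromBlocks_one] using h.map_one
  have hstar : ∀ x, star (A x) = A x⁻¹ ∧ star (D x) = D x⁻¹ := fun x => by
    simpa [star_eq_conjTranspose, fromBlocks_conjTranspose] using h.star_eq x
  exact ⟨isUnitaryRep_of_star_eq (fun x y => (hmul x y).1) hone.1 fun x => (hstar x).1,
    isUnitaryRep_of_star_eq (fun x y => (hmul x y).2) hone.2 fun x => (hstar x).2⟩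

end UnitaryRep

theorem IsIrredRep.sum_eq_zero {G : Type*} [Group G] [Fintype G] {ι : Type*} [Fintype ι]
    [DecidableEq ι] {ρ : G → Matrix ι ι ℂ} (hirr : IsIrredRep ρ)
    (hmul : ∀ x y, ρ (x * y) = ρ x * ρ y) (hnt : ∃ x, ρ x ≠ 1) : ∑ x, ρ x = 0 := by
  let V : Submodule ℂ (ι → ℂ) := ⨅ x, LinearMap.eqLocus (toLin' (ρ x)) LinearMap.id
  have hmem (v : ι → ℂ) : v ∈ V ↔ ∀ x, ρ x *ᵥ v = v := by
    simp [V, Submodule.mem_iInf, LinearMap.mem_eqLocus]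
  have hsum_mem (v : ι → ℂ) : (∑ x, ρ x) *ᵥ v ∈ V := by
    refine (hmem _).2 fun y => ?_
    simp only [Matrix.sum_mulVec, Matrix.mulVec_sum, mulVec_mulVec, ← hmul]
    exact Fintype.sum_equiv (Equiv.mulLeft y) _ _ fun _ => rfl
  rcases hirr.2 V fun x v hv => by rwa [(hmem v).1 hv x] with hbot | htop
  · refine ext_of_mulVec_single fun j => ?_
    rw [zero_mulVec]
    simpa [hbot] using hsum_mem (Pi.single j 1)
  · obtain ⟨x, hx⟩ := hnt
    refine absurd (ext_of_mulVec_single fun j => ?_) hx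
    rw [one_mulVec]
    exact (hmem _).1 (htop ▸ Submodule.mem_top) x

section Decomposition

variable {G : Type*} [Group G] {ι : Type*} [Fintype ι] {ρ : G → Matrix ι ι ℂ}

theorem EuclideanSpace.inner_toLp_mulVec (M : Matrix ι ι ℂ) (v w : EuclideanSpace ℂ ι) :
    ⟪v, WithLp.toLp 2 (M *ᵥ w.ofLp)⟫_ℂ = ⟪WithLp.toLp 2 (Mᴴ *ᵥ v.ofLp), w⟫_ℂ := by
  rw [EuclideanSpace.inner_eq_star_dotProduct, EuclideanSpace.inner_eq_star_dotProduct,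
    star_mulVec, conjTranspose_conjTranspose, dotProduct_comm, dotProduct_mulVec, dotProduct_comm]

theorem conjTranspose_mul_mul_apply_eq_inner {κ : Type*} (u : κ → EuclideanSpace ℂ ι)
    (M : Matrix ι ι ℂ) (α β : κ) :
    ((of fun i α => u α i)ᴴ * M * of fun i α => u α i) α β
      = ⟪u α, WithLp.toLp 2 (M *ᵥ (u β).ofLp)⟫_ℂ := by
  rw [EuclideanSpace.inner_eq_star_dotProduct]
  simp only [Matrix.mul_apply, conjTranspose_apply, of_apply, dotProduct, mulVec, Pi.star_apply,
    Finset.sum_mul]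
  rw [Finset.sum_comm]
  exact Finset.sum_congr rfl fun _ _ => Finset.sum_congr rfl fun _ _ => by ring

theorem IsUnitaryRep.orthogonal_invariant [DecidableEq ι] (hρ : IsUnitaryRep ρ)
    {W : Submodule ℂ (EuclideanSpace ℂ ι)} (hW : ∀ x, ∀ v ∈ W, WithLp.toLp 2 (ρ x *ᵥ v.ofLp) ∈ W)
    (x : G) (v : EuclideanSpace ℂ ι) (hv : v ∈ Wᗮ) : WithLp.toLp 2 (ρ x *ᵥ v.ofLp) ∈ Wᗮ := by
  refine (Submodule.mem_orthogonal W _).2 fun u hu => ?_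
  rw [EuclideanSpace.inner_toLp_mulVec, ← star_eq_conjTranspose, hρ.star_eq]
  exact Submodule.inner_right_of_mem_orthogonal (hW _ u hu) hv

theorem exists_invariant_of_not_isIrredRep [Nonempty ι] (h : ¬ IsIrredRep ρ) :
    ∃ W : Submodule ℂ (EuclideanSpace ℂ ι),
      (∀ x, ∀ v ∈ W, WithLp.toLp 2 (ρ x *ᵥ v.ofLp) ∈ W) ∧ W ≠ ⊥ ∧ W ≠ ⊤ := by
  obtain ⟨W, hW, hbot, htop⟩ : ∃ W : Submodule ℂ (ι → ℂ),
      (∀ x, ∀ v ∈ W, ρ x *ᵥ v ∈ W) ∧ W ≠ ⊥ ∧ W ≠ ⊤ := by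
    simpa [IsIrredRep, not_or] using h
  let e : (ι → ℂ) ≃ₗ[ℂ] EuclideanSpace ℂ ι := (WithLp.linearEquiv 2 ℂ (ι → ℂ)).symm
  have hinj := Submodule.map_injective_of_injective e.injective
  refine ⟨W.map e.toLinearMap, ?_, ?_, ?_⟩
  · rintro x _ ⟨v, hv, rfl⟩
    exact ⟨_, hW x v hv, rfl⟩
  · rwa [Ne, ← Submodule.map_bot e.toLinearMap, hinj.eq_iff]
  · rwa [Ne, ← e.range, ← Submodule.map_top, hinj.eq_iff]

theorem Submodule.exists_unitary_block_diagonalizing [DecidableEq ι]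
    (W : Submodule ℂ (EuclideanSpace ℂ ι)) :
    ∃ U : Matrix ι (Fin (Module.finrank ℂ W) ⊕ Fin (Module.finrank ℂ Wᗮ)) ℂ,
      Uᴴ * U = 1 ∧ U * Uᴴ = 1 ∧ ∀ M : Matrix ι ι ℂ,
        (∀ v ∈ W, WithLp.toLp 2 (M *ᵥ v.ofLp) ∈ W) → (∀ v ∈ Wᗮ, WithLp.toLp 2 (M *ᵥ v.ofLp) ∈ Wᗮ) →
        (Uᴴ * M * U).toBlocks₁₂ = 0 ∧ (Uᴴ * M * U).toBlocks₂₁ = 0 := by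
  -- the columns of `U` form an orthonormal basis adapted to `W ⊕ Wᗮ`
  set b₁ := stdOrthonormalBasis ℂ W
  set b₂ := stdOrthonormalBasis ℂ Wᗮ
  set u : Fin _ ⊕ Fin _ → EuclideanSpace ℂ ι := Sum.elim (fun a => (b₁ a : _)) fun c => (b₂ c : _)
  have hentry := conjTranspose_mul_mul_apply_eq_inner u
  have hU : (of fun i α => u α i)ᴴ * (of fun i α => u α i) = 1 := by
    ext α β
    rw [← Matrix.mul_one (of fun i α => u α i)ᴴ, hentry, one_mulVec, one_apply]
    rcases α with a | a <;> rcases β with c | c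
    · simpa [u, ← Submodule.coe_inner] using orthonormal_iff_ite.1 b₁.orthonormal a c
    · simpa [u] using Submodule.inner_right_of_mem_orthogonal (b₁ a).2 (b₂ c).2
    · simpa [u] using Submodule.inner_left_of_mem_orthogonal (b₁ c).2 (b₂ a).2
    · simpa [u, ← Submodule.coe_inner] using orthonormal_iff_ite.1 b₂.orthonormal a c
  have hcard : Fintype.card (Fin (Module.finrank ℂ W) ⊕ Fin (Module.finrank ℂ Wᗮ))
      = Fintype.card ι := by
    simp [Submodule.finrank_add_finrank_orthogonal]
  refine ⟨_, hU, (mul_eq_one_comm_of_equiv (Fintype.equivOfCardEq hcard)).1 hU,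
    fun M hM hM' => ⟨?_, ?_⟩⟩ <;> ext a c
  · exact (hentry M (.inl a) (.inr c)).trans
      (Submodule.inner_right_of_mem_orthogonal (b₁ a).2 (hM' _ (b₂ c).2))
  · exact (hentry M (.inr a) (.inl c)).trans
      (Submodule.inner_left_of_mem_orthogonal (hM _ (b₁ c).2) (b₂ a).2)

theorem IsUnitaryRep.exists_decomposition_of_not_isIrredRep [DecidableEq ι] [Nonempty ι]
    (hρ : IsUnitaryRep ρ) (hirr : ¬ IsIrredRep ρ) :
    ∃ (s t : ℕ) (U : Matrix ι (Fin s ⊕ Fin t) ℂ) (σ₁ : G → Matrix (Fin s) (Fin s) ℂ)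
      (σ₂ : G → Matrix (Fin t) (Fin t) ℂ), s < Fintype.card ι ∧ t < Fintype.card ι ∧
      IsUnitaryRep σ₁ ∧ IsUnitaryRep σ₂ ∧ ∀ x, ρ x = U * fromBlocks (σ₁ x) 0 0 (σ₂ x) * Uᴴ := by
  obtain ⟨W, hW, hbot, htop⟩ := exists_invariant_of_not_isIrredRep hirr
  have hcard : Module.finrank ℂ W + Module.finrank ℂ Wᗮ = Fintype.card ι := by
    rw [Submodule.finrank_add_finrank_orthogonal, finrank_euclideanSpace]
  have hpos : 0 < Module.finrank ℂ W := Submodule.one_le_finrank_iff.2 hbot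
  have hpos' : 0 < Module.finrank ℂ Wᗮ :=
    Submodule.one_le_finrank_iff.2 (mt Submodule.orthogonal_eq_bot_iff.1 htop)
  obtain ⟨U, hU, hU', hblock⟩ := W.exists_unitary_block_diagonalizing
  set τ : G → Matrix (Fin _ ⊕ Fin _) (Fin _ ⊕ Fin _) ℂ := fun x => Uᴴ * ρ x * U
  have hτ : τ = fun x => fromBlocks (τ x).toBlocks₁₁ 0 0 (τ x).toBlocks₂₂ := funext fun x => by
    obtain ⟨h₁₂, h₂₁⟩ := hblock (ρ x) (hW x) (hρ.orthogonal_invariant hW x)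
    conv_lhs => rw [← fromBlocks_toBlocks (τ x), h₁₂, h₂₁]
  have hτu : IsUnitaryRep τ := hρ.conj hU hU'
  rw [hτ] at hτu
  obtain ⟨hσ₁, hσ₂⟩ := hτu.of_fromBlocks
  refine ⟨_, _, U, _, _, by omega, by omega, hσ₁, hσ₂, fun x => ?_⟩
  rw [← congrFun hτ x]
  simp only [τ, ← Matrix.mul_assoc, hU', Matrix.one_mul]
  rw [Matrix.mul_assoc, hU', Matrix.mul_one]

end Decomposition

section MatrixCoeff

variable {G : Type*}

def matrixCoeffSpan {ι : Type*} (ρ : G → Matrix ι ι ℂ) : Submodule ℂ (G → ℂ) :=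
  Submodule.span ℂ (Set.range fun ij : ι × ι => fun x => ρ x ij.1 ij.2)

theorem matrixCoeffSpan_mul_mul_le {ι κ : Type*} [Fintype ι] [Fintype κ] (ρ : G → Matrix κ κ ℂ)
    (A : Matrix ι κ ℂ) (B : Matrix κ ι ℂ) :
    matrixCoeffSpan (fun x => A * ρ x * B) ≤ matrixCoeffSpan ρ := by
  refine Submodule.span_le.2 ?_
  rintro _ ⟨⟨i, j⟩, rfl⟩
  have hexpand : (fun x => (A * ρ x * B) i j) = ∑ a, ∑ b, (A i a * B b j) • fun x => ρ x a b := by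
    ext x
    simp only [Matrix.mul_apply, Finset.sum_mul, Finset.sum_apply, Pi.smul_apply, smul_eq_mul]
    rw [Finset.sum_comm]
    exact Finset.sum_congr rfl fun _ _ => Finset.sum_congr rfl fun _ _ => by ring
  show (fun x => (A * ρ x * B) i j) ∈ _
  rw [hexpand]
  exact Submodule.sum_mem _ fun a _ => Submodule.sum_mem _ fun b _ =>
    Submodule.smul_mem _ _ (Submodule.subset_span ⟨(a, b), rfl⟩)

theorem matrixCoeffSpan_fromBlocks_le {ι κ : Type*} (A : G → Matrix ι ι ℂ) (D : G → Matrix κ κ ℂ) :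
    matrixCoeffSpan (fun x => fromBlocks (A x) 0 0 (D x)) ≤ matrixCoeffSpan A ⊔ matrixCoeffSpan D := by
  refine Submodule.span_le.2 ?_
  rintro _ ⟨⟨i | i, j | j⟩, rfl⟩
  · exact Submodule.mem_sup_left (Submodule.subset_span ⟨(i, j), rfl⟩)
  · exact zero_mem _
  · exact zero_mem _
  · exact Submodule.mem_sup_right (Submodule.subset_span ⟨(i, j), rfl⟩)

end MatrixCoeff

noncomputable def regularRep (G : Type*) [Group G] : G → Matrix G G ℂ :=
  fun y => of fun a b => if a = y * b then 1 else 0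

theorem isUnitaryRep_regularRep (G : Type*) [Group G] [Fintype G] :
    IsUnitaryRep (regularRep G) := by
  refine isUnitaryRep_of_star_eq (fun x y => ?_) ?_ fun y => ?_ <;> ext a b
  · simp [regularRep, Matrix.mul_apply, mul_assoc]
  · simp [regularRep, one_apply]
  · simp [regularRep, eq_inv_mul_iff_mul_eq, eq_comm]

/-- Bundling the dimension makes a family of matrix coefficients of irreducible unitary
representations a non-dependent function `ι → IrredCoeff G`. -/
structure IrredCoeff (G : Type*) [Group G] where
  dim : ℕ
  rep : G → Matrix (Fin dim) (Fin dim) ℂ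
  isUnitaryRep : IsUnitaryRep rep
  isIrredRep : IsIrredRep rep
  row : Fin dim
  col : Fin dim

namespace IrredCoeff

variable {G : Type*} [Group G]

def toFun (c : IrredCoeff G) (x : G) : ℂ :=
  c.rep x c.row c.col

def IsNontrivial (c : IrredCoeff G) : Prop :=
  ∃ x, c.rep x ≠ 1

def trivial : IrredCoeff G where
  dim := 1
  rep _ := 1
  isUnitaryRep := isUnitaryRep_one
  isIrredRep := by
    refine ⟨⟨0⟩, fun W _ => ?_⟩
    have : IsSimpleOrder (Submodule ℂ (Fin 1 → ℂ)) :=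
      is_simple_module_of_finrank_eq_one (K := ℂ) (by simp)
    exact eq_bot_or_eq_top W
  row := 0
  col := 0

theorem not_isNontrivial_trivial : ¬ (trivial : IrredCoeff G).IsNontrivial :=
  fun ⟨_, h⟩ => h rfl

theorem sum_toFun_eq_zero [Fintype G] (c : IrredCoeff G) (h : c.IsNontrivial) :
    ∑ x, c.toFun x = 0 := by
  have hsum := c.isIrredRep.sum_eq_zero c.isUnitaryRep.map_mul h
  simpa [toFun, Matrix.sum_apply] using congrFun (congrFun hsum c.row) c.col

end IrredCoeff

theorem IsUnitaryRep.matrixCoeffSpan_le_span_irredCoeff_fin {G : Type*} [Group G] {n : ℕ}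
    {ρ : G → Matrix (Fin n) (Fin n) ℂ} (hρ : IsUnitaryRep ρ) :
    matrixCoeffSpan ρ ≤ Submodule.span ℂ (Set.range (IrredCoeff.toFun (G := G))) := by
  induction n using Nat.strong_induction_on with
  | _ n ih =>
  by_cases hirr : IsIrredRep ρ
  · refine Submodule.span_le.2 ?_
    rintro _ ⟨⟨i, j⟩, rfl⟩
    exact Submodule.subset_span ⟨⟨n, ρ, hρ, hirr, i, j⟩, rfl⟩
  obtain hn | hn := isEmpty_or_nonempty (Fin n)
  · rw [matrixCoeffSpan, Set.range_eq_empty, Submodule.span_empty]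
    exact bot_le
  obtain ⟨s, t, U, σ₁, σ₂, hs, ht, hσ₁, hσ₂, hdecomp⟩ :=
    hρ.exists_decomposition_of_not_isIrredRep hirr
  rw [Fintype.card_fin] at hs ht
  calc matrixCoeffSpan ρ
      = matrixCoeffSpan fun x => U * fromBlocks (σ₁ x) 0 0 (σ₂ x) * Uᴴ := by rw [funext hdecomp]
    _ ≤ matrixCoeffSpan fun x => fromBlocks (σ₁ x) 0 0 (σ₂ x) := matrixCoeffSpan_mul_mul_le _ _ _
    _ ≤ matrixCoeffSpan σ₁ ⊔ matrixCoeffSpan σ₂ := matrixCoeffSpan_fromBlocks_le _ _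
    _ ≤ _ := sup_le (ih s hs hσ₁) (ih t ht hσ₂)

theorem IsUnitaryRep.matrixCoeffSpan_le_span_irredCoeff {G : Type*} [Group G] {ι : Type*}
    [Fintype ι] [DecidableEq ι] {ρ : G → Matrix ι ι ℂ} (hρ : IsUnitaryRep ρ) :
    matrixCoeffSpan ρ ≤ Submodule.span ℂ (Set.range (IrredCoeff.toFun (G := G))) := by
  let P : Matrix ι (Fin (Fintype.card ι)) ℂ :=
    (1 : Matrix ι ι ℂ).submatrix id (Fintype.equivFin ι).symm
  have hP : Pᴴ * P = 1 := by
    simp [P, conjTranspose_submatrix, ← submatrix_mul _ _ _ _ _ Function.bijective_id]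
  have hP' : P * Pᴴ = 1 := by
    simp [P, conjTranspose_submatrix, submatrix_mul_equiv _ _ _ (Fintype.equivFin ι).symm]
  have hρP : ρ = fun x => P * (Pᴴ * ρ x * P) * Pᴴ := by
    funext x
    simp only [← Matrix.mul_assoc, hP', Matrix.one_mul]
    rw [Matrix.mul_assoc, hP', Matrix.mul_one]
  calc matrixCoeffSpan ρ = matrixCoeffSpan fun x => P * (Pᴴ * ρ x * P) * Pᴴ := congrArg _ hρP
    _ ≤ matrixCoeffSpan fun x => Pᴴ * ρ x * P := matrixCoeffSpan_mul_mul_le _ _ _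
    _ ≤ _ := (hρ.conj hP hP').matrixCoeffSpan_le_span_irredCoeff_fin

theorem IrredCoeff.span_range_toFun_eq_top {G : Type*} [Group G] [Fintype G] :
    Submodule.span ℂ (Set.range (toFun (G := G))) = ⊤ := by
  refine eq_top_iff.2 ((Pi.basisFun ℂ G).span_eq.symm.trans_le (Submodule.span_le.2 ?_))
  rintro _ ⟨z, rfl⟩
  have hδ : Pi.basisFun ℂ G z = fun y => regularRep G y z 1 := by
    ext y
    simp [regularRep, Pi.single_apply, eq_comm]
  rw [hδ]
  exact (isUnitaryRep_regularRep G).matrixCoeffSpan_le_span_irredCoeff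
    (Submodule.subset_span ⟨(z, 1), rfl⟩)

theorem eq_zero_of_sum_mul_prod_eq_zero {R ι X γ : Type*} [CommRing R] [Fintype ι] [DecidableEq ι]
    [Fintype X] [DecidableEq X] {g : γ → X → R} (hg : Submodule.span R (Set.range g) = ⊤)
    {q : (ι → X) → R} (h : ∀ c : ι → γ, ∑ z, q z * ∏ i, g (c i) (z i) = 0) : q = 0 := by
  let φ : MultilinearMap R (fun _ : ι => X → R) R :=
    ∑ z, q z • (MultilinearMap.mkPiAlgebra R ι R).compLinearMap fun i => LinearMap.proj (z i)
  have hφ (f : ι → X → R) : φ f = ∑ z, q z * ∏ i, f i (z i) := by simp [φ]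
  have hφ0 : φ = 0 := MultilinearMap.ext_of_span_eq_top (g := fun _ => g) (fun _ => hg)
    fun c => by simp [hφ, h c]
  funext z
  have hδ := hφ fun i => Pi.single (z i) 1
  rw [hφ0, Fintype.sum_eq_single z] at hδ
  · simpa using hδ.symm
  · intro z' hz'
    obtain ⟨i, hi⟩ := Function.ne_iff.1 hz'
    rw [Finset.prod_eq_zero (Finset.mem_univ i) (by simp [hi]), mul_zero]

theorem sum_marginal_mul {H : Type*} [Fintype H] {m k : ℕ} (p : (Fin m → H) → ℝ)
    (S : Fin k → Fin m) (f : (Fin k → H) → ℂ) :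
    ∑ z, (marginal p S z : ℂ) * f z = ∑ x, (p x : ℂ) * f fun i => x (S i) := by
  simp only [marginal, Complex.ofReal_sum, Finset.sum_mul]
  rw [Finset.sum_comm]
  refine Finset.sum_congr rfl fun x _ => ?_
  rw [Fintype.sum_eq_single fun i => x (S i)]
  · simp
  · intro z hz
    rw [if_neg fun h => hz (funext h).symm, Complex.ofReal_zero, zero_mul]

namespace IrredCoeff

variable {H : Type*} [Group H] {m k : ℕ}

theorem sum_mul_prod_toFun_eq_zero_of_repFourier_eq_zero [Fintype H] (f : (Fin m → H) → ℝ)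
    (F : Fin m → IrredCoeff H)
    (h : repFourier (fun x => (f x : ℂ)) (tensorRep fun t => (F t).rep) = 0) :
    ∑ x, (f x : ℂ) * ∏ t, (F t).toFun (x t) = 0 := by
  have hentry := congrFun (congrFun h fun t => (F t).row) fun t => (F t).col
  simp only [repFourier, Fintype.card_pi, Finset.prod_const, Finset.card_univ, Fintype.card_fin,
    Nat.cast_pow, Complex.coe_smul, Matrix.smul_apply, Matrix.sum_apply, map_apply, tensorRep,
    map_prod, Complex.real_smul, smul_eq_mul, Matrix.zero_apply, mul_eq_zero, inv_eq_zero,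
    pow_eq_zero_iff', Nat.cast_eq_zero, Fintype.card_ne_zero, ne_eq, false_and, false_or] at hentry
  simpa [toFun] using congrArg (starRingEnd ℂ) hentry

theorem exists_extend_trivial {S : Fin k → Fin m} (hS : Function.Injective S)
    (c : Fin k → IrredCoeff H) {i : Fin k} (hi : (c i).IsNontrivial) :
    ∃ F : Fin m → IrredCoeff H, 1 ≤ suppSize (fun t => (F t).rep) ∧
      suppSize (fun t => (F t).rep) ≤ k ∧
      ∀ x : Fin m → H, ∏ t, (F t).toFun (x t) = ∏ i, (c i).toFun (x (S i)) := by
  set F : Fin m → IrredCoeff H := Function.extend S c fun _ => trivial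
  have hFS (i : Fin k) : F (S i) = c i := hS.extend_apply _ _ i
  have hFout (t : Fin m) (ht : t ∉ Set.range S) : F t = trivial :=
    Function.extend_apply' _ _ t (by simpa using ht)
  refine ⟨F, Finset.card_pos.2 ⟨S i, ?_⟩, ?_, fun x => ?_⟩
  · simp only [Finset.mem_filter, Finset.mem_univ, true_and]
    change (F (S i)).IsNontrivial
    rwa [hFS]
  · refine (Finset.card_le_card fun t ht => ?_).trans
      ((Finset.card_image_le (s := Finset.univ) (f := S)).trans_eq (Finset.card_fin k))
    by_contra hmem
    simp only [Finset.mem_filter, Finset.mem_univ, true_and] at ht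
    change (F t).IsNontrivial at ht
    rw [hFout t (by simpa using hmem)] at ht
    exact not_isNontrivial_trivial ht
  · refine (Fintype.prod_of_injective S hS _ _ (fun t ht => ?_) fun i => ?_).symm
    · rw [hFout t ht]; rfl
    · rw [hFS]

theorem sum_marginal_sub_mul_prod_eq_zero [Fintype H] {p : (Fin m → H) → ℝ}
    (hp1 : ∑ x, p x = 1)
    (hvanish : ∀ F : Fin m → IrredCoeff H, 1 ≤ suppSize (fun t => (F t).rep) →
      suppSize (fun t => (F t).rep) ≤ k → ∑ x, (p x : ℂ) * ∏ t, (F t).toFun (x t) = 0)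
    {S : Fin k → Fin m} (hS : Function.Injective S) (c : Fin k → IrredCoeff H) :
    ∑ z, ((marginal p S z : ℂ) - (Fintype.card H : ℂ)⁻¹ ^ k) * ∏ i, (c i).toFun (z i) = 0 := by
  simp only [sub_mul, Finset.sum_sub_distrib, sum_marginal_mul, ← Finset.mul_sum]
  by_cases hnt : ∃ i, (c i).IsNontrivial
  · obtain ⟨i, hi⟩ := hnt
    obtain ⟨F, hpos, hle, hF⟩ := exists_extend_trivial hS c hi
    rw [← Fintype.prod_sum, Finset.prod_eq_zero (Finset.mem_univ i) ((c i).sum_toFun_eq_zero hi),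
      mul_zero, sub_zero]
    simpa [hF] using hvanish F hpos hle
  · simp only [not_exists, IsNontrivial, not_not] at hnt
    have hconst (z : Fin k → H) : ∏ i, (c i).toFun (z i) = ∏ i, (c i).toFun 1 := by
      simp [toFun, hnt]
    have hcard : (Fintype.card H : ℂ) ≠ 0 := Nat.cast_ne_zero.2 Fintype.card_ne_zero
    simp only [hconst, ← Finset.sum_mul, ← Complex.ofReal_sum, hp1, Finset.sum_const,
      Finset.card_univ, Fintype.card_fun, Fintype.card_fin, nsmul_eq_mul]
    rw [Complex.ofReal_one, Nat.cast_pow, ← mul_assoc, ← mul_pow, inv_mul_cancel₀ hcard, one_pow,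
      one_mul, sub_self]

end IrredCoeff

theorem k_uniform_of_fourier_vanish_general {H : Type*} [Group H] [Fintype H] {m k : ℕ}
    (p : (Fin m → H) → ℝ) (hp1 : ∑ x, p x = 1)
    (hvanish : ∀ (n : Fin m → ℕ) (ρ : ∀ t, H → Matrix (Fin (n t)) (Fin (n t)) ℂ),
      (∀ t, IsUnitaryRep (ρ t)) → (∀ t, IsIrredRep (ρ t)) →
      1 ≤ suppSize ρ → suppSize ρ ≤ k →
      repFourier (fun x => (p x : ℂ)) (tensorRep ρ) = 0) :
    ∀ S : Fin k → Fin m, Function.Injective S →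
      ∀ z : Fin k → H, marginal p S z = 1 / (Fintype.card H : ℝ) ^ k := by
  intro S hS z
  have hcoeff (F : Fin m → IrredCoeff H) (h₁ : 1 ≤ suppSize fun t => (F t).rep)
      (hk : suppSize (fun t => (F t).rep) ≤ k) : ∑ x, (p x : ℂ) * ∏ t, (F t).toFun (x t) = 0 :=
    IrredCoeff.sum_mul_prod_toFun_eq_zero_of_repFourier_eq_zero p F <| hvanish (fun t => (F t).dim)
      (fun t => (F t).rep) (fun t => (F t).isUnitaryRep) (fun t => (F t).isIrredRep) h₁ hk
  have hzero := congrFun (eq_zero_of_sum_mul_prod_eq_zero IrredCoeff.span_range_toFun_eq_top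
    (IrredCoeff.sum_marginal_sub_mul_prod_eq_zero hp1 hcoeff hS)) z
  rw [Pi.zero_apply, sub_eq_zero] at hzero
  rw [one_div, ← inv_pow]
  exact Complex.ofReal_injective (by push_cast; exact hzero)

/-- If all Fourier coefficients of `p` at (tensor-product) irreducible representations
of `H^m` with `1 ≤ |ρ| ≤ k` non-trivial factors vanish, then `p` is `k`-uniform. -/
theorem k_uniform_of_fourier_vanish {H : Type*} [Group H] [Fintype H] {m k : ℕ}
    (p : (Fin m → H) → ℝ) (hp0 : ∀ x, 0 ≤ p x) (hp1 : ∑ x, p x = 1)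
    (hvanish : ∀ (n : Fin m → ℕ) (ρ : ∀ t, H → Matrix (Fin (n t)) (Fin (n t)) ℂ),
      (∀ t, IsUnitaryRep (ρ t)) → (∀ t, IsIrredRep (ρ t)) →
      1 ≤ suppSize ρ → suppSize ρ ≤ k →
      repFourier (fun x => (p x : ℂ)) (tensorRep ρ) = 0) :
    ∀ S : Fin k → Fin m, Function.Injective S →
      ∀ z : Fin k → H, marginal p S z = 1 / (Fintype.card H : ℝ) ^ k :=
  k_uniform_of_fourier_vanish_general p hp1 hvanish
end

section
/- Define a distribution s on H^{2^k} as follows: pick u_i^0, u_i^1 uniformly and independently from a finite group H for i ∈ [k]; for x ∈ {0,1}^k the coordinate s(x) is the ordered product ∏_{i<k} u_i^{x_i}. Then s is 3-uniform: for any three distinct strings x, y, z ∈ {0,1}^k, the triple (s(x), s(y), s(z)) is uniform on H³. -/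
open scoped BigOperators Classical

/-- The coordinate `s(x) = ∏_{i<k} u_i^{x_i}` (ordered product, increasing `i`) of the
distribution `s` on `H^{2^k}`, determined by the seed `u`. -/
def sProd {H : Type*} [Group H] {k : ℕ} (u : Fin k → Bool → H) (x : Fin k → Bool) : H :=
  ((List.finRange k).map fun i => u i (x i)).prod

/-!
With all entries of the seed but one fixed, a coordinate `s(x)` either does not depend on that
entry (if `x` does not use it) or is a left-and-right translate of it, hence a bijective function
of it. So a condition `s(x) = a` can be removed at the cost of a factor `|H|` in the count of seeds,
through any entry used by `x` and by none of the remaining conditions. For three distinct strings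
there is a position `i` where one of them, `w`, differs from the other two, `p` and `q`, and a
position `j` where `p` and `q` differ; the conditions on `s(w)`, `s(q)`, `s(p)` are then removed
in this order through the entries `u_i^{w_i}`, `u_j^{q_j}`, `u_j^{p_j}`.
-/

open Function Finset

section SlotCounting

variable {α H : Type*} [Fintype α] [DecidableEq α] [Fintype H] [DecidableEq H]

theorem card_filter_and_eq_mul_card (t : α) (P : (α → H) → Prop) [DecidablePred P]
    (G : (α → H) → H) (hP : ∀ f h, P (update f t h) ↔ P f)
    (hG : ∀ f, Bijective fun h => G (update f t h)) (a : H) :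
    #{f | P f ∧ G f = a} * Fintype.card H = #{f | P f} := by
  rw [← card_univ, ← card_product]
  refine card_bij (fun fh _ => update fh.1 t fh.2) ?_ ?_ ?_
  · rintro ⟨f, h⟩ hf
    simp only [mem_product, mem_filter, mem_univ, and_true, true_and] at hf ⊢
    exact (hP f h).2 hf.1
  · rintro ⟨f₁, h₁⟩ hf₁ ⟨f₂, h₂⟩ hf₂ heq
    simp only [mem_product, mem_filter, mem_univ, and_true, true_and] at hf₁ hf₂ heq
    have hh : h₁ = h₂ := by simpa using congrFun heq t
    have hoff : ∀ h, update f₁ t h = update f₂ t h := fun h => by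
      simpa using congrArg (update · t h) heq
    have ht : f₁ t = f₂ t := (hG f₁).1 <| by
      simp only [update_eq_self, hoff, hf₁.2, hf₂.2]
    rw [hh, ← update_eq_self t f₁, ← update_eq_self t f₂, hoff, ht]
  · intro g hg
    simp only [mem_filter, mem_univ, true_and] at hg
    obtain ⟨h, hh⟩ := (hG g).2 a
    refine ⟨(update g t h, g t), ?_, by simp⟩
    simp only [mem_product, mem_filter, mem_univ, and_true, true_and]
    exact ⟨(hP g h).2 hg, hh⟩

end SlotCounting

section SeedProduct

variable {H : Type*} [Group H] {k : ℕ}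

theorem sProd_curry_update_of_ne (f : Fin k × Bool → H) {x : Fin k → Bool} {i : Fin k}
    {b : Bool} (hb : x i ≠ b) (h : H) :
    sProd (curry (update f (i, b) h)) x = sProd (curry f) x := by
  refine congrArg List.prod (List.map_congr_left fun l _ => update_of_ne ?_ _ _)
  rintro ⟨rfl, rfl⟩
  exact hb rfl

theorem sProd_curry_update_self (f : Fin k × Bool → H) (x : Fin k → Bool) (i : Fin k) (h : H) :
    sProd (curry (update f (i, x i) h)) x =
      (((List.finRange k).map fun l => f (l, x l)).set i h).prod := by
  refine congrArg List.prod (List.ext_getElem (by simp) fun m hm _ => ?_)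
  simp only [List.getElem_map, List.getElem_set, List.getElem_finRange, curry_apply, update_apply,
    Prod.mk.injEq, Fin.ext_iff]
  grind

theorem bijective_sProd_curry_update_self (f : Fin k × Bool → H) (x : Fin k → Bool) (i : Fin k) :
    Bijective fun h => sProd (curry (update f (i, x i) h)) x := by
  simp only [sProd_curry_update_self, List.prod_set, List.length_map, List.length_finRange,
    i.isLt, if_true]
  exact ((Equiv.mulLeft _).trans (Equiv.mulRight _)).bijective

end SeedProduct

theorem card_sProd_eq_of_minority {H : Type*} [Group H] [Fintype H] {k : ℕ}
    {p q w : Fin k → Bool} {i j : Fin k} (hpq : p j ≠ q j) (hpw : p i ≠ w i) (hqw : q i ≠ w i)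
    (a b c : H) :
    #{u : Fin k → Bool → H | sProd u p = a ∧ sProd u q = b ∧ sProd u w = c} *
      Fintype.card H ^ 3 = Fintype.card H ^ (2 * k) := by
  have h_curry : #{u : Fin k → Bool → H | sProd u p = a ∧ sProd u q = b ∧ sProd u w = c} =
      #{f : Fin k × Bool → H |
        sProd (curry f) p = a ∧ sProd (curry f) q = b ∧ sProd (curry f) w = c} :=
    card_equiv (Equiv.curry _ _ _).symm (by simp)
  have h_w : #{f : Fin k × Bool → H |
        (sProd (curry f) p = a ∧ sProd (curry f) q = b) ∧ sProd (curry f) w = c} *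
      Fintype.card H = #{f : Fin k × Bool → H | sProd (curry f) p = a ∧ sProd (curry f) q = b} :=
    card_filter_and_eq_mul_card (i, w i) _ _
      (fun f h => by rw [sProd_curry_update_of_ne f hpw, sProd_curry_update_of_ne f hqw])
      (fun f => bijective_sProd_curry_update_self f w i) c
  have h_q : #{f : Fin k × Bool → H | sProd (curry f) p = a ∧ sProd (curry f) q = b} *
      Fintype.card H = #{f : Fin k × Bool → H | sProd (curry f) p = a} :=
    card_filter_and_eq_mul_card (j, q j) _ _
      (fun f h => by rw [sProd_curry_update_of_ne f hpq])
      (fun f => bijective_sProd_curry_update_self f q j) b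
  have h_p : #{f : Fin k × Bool → H | True ∧ sProd (curry f) p = a} * Fintype.card H =
      #{f : Fin k × Bool → H | True} :=
    card_filter_and_eq_mul_card (j, p j) _ _ (fun _ _ => Iff.rfl)
      (fun f => bijective_sProd_curry_update_self f p j) a
  simp only [true_and, filter_true, card_univ, Fintype.card_fun, Fintype.card_prod,
    Fintype.card_fin, Fintype.card_bool] at h_p
  simp only [and_assoc] at h_w
  rw [h_curry, pow_succ, pow_succ, pow_one, ← mul_assoc, ← mul_assoc, h_w, h_q, h_p, mul_comm]

/-- `s` is 3-uniform: for any three distinct strings `x y z ∈ {0,1}^k`, the triple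
`(s(x), s(y), s(z))` is uniform over `H³` when the seed `u` is uniform. -/
theorem s_three_uniform {H : Type*} [Group H] [Fintype H] {k : ℕ}
    (x y z : Fin k → Bool) (hxy : x ≠ y) (hxz : x ≠ z) (hyz : y ≠ z) :
    ∀ a b c : H,
      (Finset.univ.filter fun u : Fin k → Bool → H =>
        sProd u x = a ∧ sProd u y = b ∧ sProd u z = c).card * Fintype.card H ^ 3 =
      Fintype.card H ^ (2 * k) := by
  intro a b c
  obtain ⟨i, hi⟩ := Function.ne_iff.mp hxy
  by_cases hzi : z i = x i
  · obtain ⟨j, hj⟩ := Function.ne_iff.mp hxz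
    rw [filter_congr fun u _ => and_congr_right fun _ => and_comm]
    exact card_sProd_eq_of_minority hj hi (hzi ▸ hi) a c b
  · obtain ⟨j, hj⟩ := Function.ne_iff.mp hyz
    rw [filter_congr fun u _ => and_rotate]
    exact card_sProd_eq_of_minority hj (Ne.symm hi) hzi b c a
end

section
/- The distribution s on H^{2^k} (k ≥ 2, |H| ≥ 2) defined by s(x) = ∏_{i<k} u_i^{x_i} for uniform independent u_i^0, u_i^1 ∈ H is not 4-uniform: there exist four distinct strings x,y,z,w ∈ {0,1}^k such that (s(x),s(y),s(z),s(w)) is not uniform on H⁴. -/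
open scoped BigOperators Classical

/-!
Splitting off the first two factors, `s(b c t) = u₀^b u₁^c R` with `R` depending only on the
tail `t`. Hence `s(11t) = s(10t) s(00t)⁻¹ s(01t)`: the fourth coordinate is a function of the
other three, so the value `(1, 1, 1, e)` with `e ≠ 1` is never taken, whereas uniformity would
give it `|H|^{2k-4} > 0` seeds.
-/

section

variable {H : Type*} [Group H] {k : ℕ}

theorem sProd_cons (u : Fin (k + 1) → Bool → H) (b : Bool) (x : Fin k → Bool) :
    sProd u (Fin.cons b x : Fin (k + 1) → Bool) = u 0 b * sProd (fun i => u i.succ) x := by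
  simp [sProd, List.finRange_succ, Function.comp_def]

theorem sProd_cons_cons_eq (u : Fin (k + 2) → Bool → H) (b b' c c' : Bool) (t : Fin k → Bool) :
    sProd u (Fin.cons b (Fin.cons c t) : Fin (k + 2) → Bool) =
      sProd u (Fin.cons b (Fin.cons c' t) : Fin (k + 2) → Bool) *
        (sProd u (Fin.cons b' (Fin.cons c' t) : Fin (k + 2) → Bool))⁻¹ *
          sProd u (Fin.cons b' (Fin.cons c t) : Fin (k + 2) → Bool) := by
  simp only [sProd_cons]
  group

end

/-- `s` is not 4-uniform: there are four distinct strings `x, y, z, w ∈ {0,1}^k` such that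
`(s(x), s(y), s(z), s(w))` is not uniform over `H⁴`. -/
theorem s_not_four_uniform {H : Type*} [Group H] [Fintype H] {k : ℕ}
    (hk : 2 ≤ k) (hH : 2 ≤ Fintype.card H) :
    ∃ x y z w : Fin k → Bool, x ≠ y ∧ x ≠ z ∧ x ≠ w ∧ y ≠ z ∧ y ≠ w ∧ z ≠ w ∧
      ∃ a b c e : H,
        (Finset.univ.filter fun u : Fin k → Bool → H =>
          sProd u x = a ∧ sProd u y = b ∧ sProd u z = c ∧ sProd u w = e).card *
            Fintype.card H ^ 4 ≠
          Fintype.card H ^ (2 * k) := by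
  obtain ⟨m, rfl⟩ : ∃ m, k = m + 2 := ⟨k - 2, by omega⟩
  obtain ⟨e, he⟩ := Fintype.exists_ne_of_one_lt_card hH (1 : H)
  let str (b c : Bool) : Fin (m + 2) → Bool := Fin.cons b (Fin.cons c fun _ => false)
  refine ⟨str false false, str true false, str false true, str true true,
    by simp [str], by simp [str], by simp [str], by simp [str], by simp [str], by simp [str],
    1, 1, 1, e, ?_⟩
  have hempty : (Finset.univ.filter fun u : Fin (m + 2) → Bool → H =>
      sProd u (str false false) = 1 ∧ sProd u (str true false) = 1 ∧
        sProd u (str false true) = 1 ∧ sProd u (str true true) = e) = ∅ := by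
    refine Finset.filter_eq_empty_iff.mpr fun u _ ⟨h00, h10, h01, h11⟩ => he ?_
    rw [← h11, sProd_cons_cons_eq u true false true false, h00, h10, h01, inv_one, mul_one,
      mul_one]
  rw [hempty, Finset.card_empty, zero_mul]
  exact (pow_pos Fintype.card_pos _).ne
end
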